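/- Let A be a bounded linear operator on H. Then η(A)² ≤ (1/4)·‖ |A|² + |A*|² + 4|A|⁴ ‖_ber + (1/2)·ber(A²). -/

import Mathlib

open scoped InnerProductSpace
open ContinuousLinearMap

variable {H : Type*} [NormedAddCommGroup H] [InnerProductSpace ℂ H] [CompleteSpace H]
variable {Ω : Type*} [Nonempty Ω]

/-- Berezin number: `ber(T) = sup_{λ∈Ω} |⟨T k̂_λ, k̂_λ⟩|`. -/
noncomputable def ber (k : Ω → H) (T : H →L[ℂ] H) : ℝ :=
  ⨆ lam : Ω, ‖⟪T (k lam), k lam⟫_ℂ‖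

/-- Berezin norm: `‖T‖_ber = sup_{λ,μ∈Ω} |⟨T k̂_λ, k̂_μ⟩|`. -/
noncomputable def bernorm (k : Ω → H) (T : H →L[ℂ] H) : ℝ :=
  ⨆ p : Ω × Ω, ‖⟪T (k p.1), k p.2⟫_ℂ‖

/-- Least Berezin number: `c(T) = inf_{λ∈Ω} |⟨T k̂_λ, k̂_λ⟩|`. -/
noncomputable def lber (k : Ω → H) (T : H →L[ℂ] H) : ℝ :=
  ⨅ lam : Ω, ‖⟪T (k lam), k lam⟫_ℂ‖

/-- Davis-Wielandt-Berezin radius: `η(T) = sup_{λ∈Ω} √(|⟨T k̂_λ, k̂_λ⟩|² + ‖T k̂_λ‖⁴)`. -/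
noncomputable def eta (k : Ω → H) (T : H →L[ℂ] H) : ℝ :=
  ⨆ lam : Ω, Real.sqrt (‖⟪T (k lam), k lam⟫_ℂ‖ ^ 2 + ‖T (k lam)‖ ^ 4)

/-- The modulus `|A| = (A*A)^{1/2}`. -/
noncomputable def absop (A : H →L[ℂ] H) : H →L[ℂ] H := CFC.sqrt (adjoint A * A)

/-!
For a unit vector `x`, Buzano's inequality applied to `⟪A x, x⟫ * ⟪x, A† x⟫ = ⟪A x, x⟫ ^ 2` gives
`|⟪A x, x⟫|² ≤ |⟪A² x, x⟫| / 2 + (‖A x‖² + ‖A† x‖²) / 4`, and Cauchy–Schwarz gives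
`‖A x‖⁴ = ⟪|A|² x, x⟫² ≤ ‖|A|² x‖² = ⟪|A|⁴ x, x⟫`. Adding the two, the right-hand side is
`⟪(|A|² + |A*|² + 4|A|⁴) x, x⟫ / 4 + |⟪A² x, x⟫| / 2`; taking `x = k̂_λ` and suprema gives the bound.
-/

section Operators

variable {𝕜 E : Type*} [RCLike 𝕜] [NormedAddCommGroup E] [InnerProductSpace 𝕜 E]

/-- Buzano's inequality; the proof reflects `a` in the line `𝕜 ∙ e`. -/
theorem norm_inner_mul_inner_le_of_norm_eq_one {e : E} (he : ‖e‖ = 1) (a b : E) :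
    ‖⟪a, e⟫_𝕜 * ⟪e, b⟫_𝕜‖ ≤ (‖⟪a, b⟫_𝕜‖ + ‖a‖ * ‖b‖) / 2 := by
  set u := (𝕜 ∙ e).reflection a
  have hu : 2 * (⟪a, e⟫_𝕜 * ⟪e, b⟫_𝕜) = ⟪u, b⟫_𝕜 + ⟪a, b⟫_𝕜 := by
    rw [show u = _ from Submodule.reflection_singleton_apply e a, he, RCLike.ofReal_one, one_pow,
      div_one, inner_sub_left, sub_add_cancel, two_smul, inner_add_left, inner_smul_left,
      inner_conj_symm]
    ring
  have hub : ‖⟪u, b⟫_𝕜‖ ≤ ‖a‖ * ‖b‖ :=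
    ((𝕜 ∙ e).reflection.norm_map a) ▸ norm_inner_le_norm u b
  have htri := norm_add_le ⟪u, b⟫_𝕜 ⟪a, b⟫_𝕜
  rw [← hu, norm_mul, RCLike.norm_two] at htri
  linarith

theorem norm_inner_apply_le_opNorm (T : E →L[𝕜] E) {x y : E} (hx : ‖x‖ = 1) (hy : ‖y‖ = 1) :
    ‖⟪T x, y⟫_𝕜‖ ≤ ‖T‖ :=
  calc ‖⟪T x, y⟫_𝕜‖ ≤ ‖T x‖ * ‖y‖ := norm_inner_le_norm _ _
    _ ≤ ‖T‖ := by simpa [hx, hy] using T.le_opNorm x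

variable [CompleteSpace E]

theorem norm_inner_apply_self_sq_le (A : E →L[𝕜] E) {x : E} (hx : ‖x‖ = 1) :
    ‖⟪A x, x⟫_𝕜‖ ^ 2 ≤ ‖⟪(A ^ 2) x, x⟫_𝕜‖ / 2 + (‖A x‖ ^ 2 + ‖adjoint A x‖ ^ 2) / 4 := by
  have hbuzano := norm_inner_mul_inner_le_of_norm_eq_one (𝕜 := 𝕜) hx (A x) (adjoint A x)
  rw [adjoint_inner_right, adjoint_inner_right, norm_mul, ← sq] at hbuzano
  rw [sq A, mul_apply_eq_comp]
  nlinarith [sq_nonneg (‖A x‖ - ‖adjoint A x‖)]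

theorem norm_apply_pow_four_le (A : E →L[𝕜] E) {x : E} (hx : ‖x‖ = 1) :
    ‖A x‖ ^ 4 ≤ ‖(adjoint A * A) x‖ ^ 2 := by
  have h : ‖A x‖ ^ 2 ≤ ‖(adjoint A * A) x‖ := by
    calc ‖A x‖ ^ 2 = RCLike.re ⟪(adjoint A * A) x, x⟫_𝕜 := apply_norm_sq_eq_inner_adjoint_left A x
      _ ≤ ‖⟪(adjoint A * A) x, x⟫_𝕜‖ := RCLike.re_le_norm _
      _ ≤ ‖(adjoint A * A) x‖ := by simpa [hx] using norm_inner_le_norm (𝕜 := 𝕜) _ x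
  calc ‖A x‖ ^ 4 = (‖A x‖ ^ 2) ^ 2 := by ring
    _ ≤ ‖(adjoint A * A) x‖ ^ 2 := by gcongr

theorem re_inner_adjoint_mul_self_combination_apply (A : E →L[𝕜] E) (x : E) :
    RCLike.re ⟪(adjoint A * A + A * adjoint A + 4 • (adjoint A * A) ^ 2) x, x⟫_𝕜 =
      ‖A x‖ ^ 2 + ‖adjoint A x‖ ^ 2 + 4 * ‖(adjoint A * A) x‖ ^ 2 := by
  have hsa : adjoint (adjoint A * A) = adjoint A * A := by
    simpa only [star_eq_adjoint] using (IsSelfAdjoint.star_mul_self A).star_eq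
  rw [apply_norm_sq_eq_inner_adjoint_left A, apply_norm_sq_eq_inner_adjoint_left (adjoint A),
    apply_norm_sq_eq_inner_adjoint_left (adjoint A * A), adjoint_adjoint, hsa,
    ← Nat.cast_smul_eq_nsmul 𝕜]
  simp [inner_add_left, inner_smul_left, sq]

end Operators

theorem absop_sq (A : H →L[ℂ] H) : absop A ^ 2 = adjoint A * A :=
  CFC.sq_sqrt _ (by simpa only [star_eq_adjoint] using star_mul_self_nonneg A)

section Berezin

variable {E ι : Type*} [NormedAddCommGroup E] [InnerProductSpace ℂ E] {k : ι → E}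

theorem norm_inner_le_bernorm (hk : ∀ i, ‖k i‖ = 1) (T : E →L[ℂ] E) (i j : ι) :
    ‖⟪T (k i), k j⟫_ℂ‖ ≤ bernorm k T := by
  refine le_ciSup (f := fun p : ι × ι => ‖⟪T (k p.1), k p.2⟫_ℂ‖) ⟨‖T‖, ?_⟩ (i, j)
  rintro _ ⟨p, rfl⟩
  exact norm_inner_apply_le_opNorm T (hk p.1) (hk p.2)

theorem norm_inner_le_ber (hk : ∀ i, ‖k i‖ = 1) (T : E →L[ℂ] E) (i : ι) :
    ‖⟪T (k i), k i⟫_ℂ‖ ≤ ber k T := by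
  refine le_ciSup (f := fun i => ‖⟪T (k i), k i⟫_ℂ‖) ⟨‖T‖, ?_⟩ i
  rintro _ ⟨i, rfl⟩
  exact norm_inner_apply_le_opNorm T (hk i) (hk i)

theorem eta_sq_le [Nonempty ι] (A : E →L[ℂ] E) {C : ℝ}
    (h : ∀ i, ‖⟪A (k i), k i⟫_ℂ‖ ^ 2 + ‖A (k i)‖ ^ 4 ≤ C) : eta k A ^ 2 ≤ C := by
  have hC : 0 ≤ C := (by positivity : (0 : ℝ) ≤ _).trans (h (Classical.arbitrary ι))
  calc eta k A ^ 2 ≤ √C ^ 2 := by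
        gcongr
        · exact Real.iSup_nonneg fun _ => Real.sqrt_nonneg _
        · exact ciSup_le fun i => Real.sqrt_le_sqrt (h i)
    _ = C := Real.sq_sqrt hC

end Berezin

theorem stmt17 (k : Ω → H) (hk : ∀ lam, ‖k lam‖ = 1) (A : H →L[ℂ] H) :
    (eta k A) ^ 2 ≤
      (1 / 4) * bernorm k ((absop A) ^ 2 + (absop (adjoint A)) ^ 2 + 4 • (absop A) ^ 4) +
        (1 / 2) * ber k (A ^ 2) := by
  rw [show absop A ^ 4 = (absop A ^ 2) ^ 2 by rw [← pow_mul], absop_sq, absop_sq, adjoint_adjoint]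
  refine eta_sq_le A fun lam => ?_
  have hbuzano := norm_inner_apply_self_sq_le A (hk lam)
  have hfourth := norm_apply_pow_four_le A (hk lam)
  have hber := norm_inner_le_ber hk (A ^ 2) lam
  have hbernorm := (RCLike.re_le_norm _).trans (norm_inner_le_bernorm hk
    (adjoint A * A + A * adjoint A + 4 • (adjoint A * A) ^ 2) lam lam)
  rw [re_inner_adjoint_mul_self_combination_apply] at hbernorm
  linarith
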